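/- Under assumption A1, let ν ∈ (0, 1], x, z ∈ F_p⁰, and μ > 0, with θ = ‖z − x‖_{x,ν} ≤ 1/4. Partition the coordinates as L = {j : x_j ≥ ν}, S = {j : x_j < ν}, and define w ∈ ℝⁿ by w_S = x_S and w_L = z_L (so w > 0), with W = diag(w). Let Δx = −X P_{AX}((1/μ)Xc − e) be the exact primal Newton direction and Δx̃ = −W P_{AW} W X⁻¹((1/μ)Xc − e) the delayed-scaling surrogate direction. Then ‖X⁻¹(Δx − Δx̃)‖ ≤ 3θ δ(x, μ). -/

import Mathlib

open Matrix

noncomputable def euclNorm {ι : Type*} [Fintype ι] (v : ι → ℝ) : ℝ :=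
  Real.sqrt (∑ i, (v i) ^ 2)

noncomputable def opNorm {ι κ : Type*} [Fintype ι] [Fintype κ]
    (M : Matrix ι κ ℝ) : ℝ :=
  sSup {r : ℝ | ∃ v : κ → ℝ, euclNorm v ≤ 1 ∧ r = euclNorm (M *ᵥ v)}

noncomputable def lambdaMin {ι : Type*} [Fintype ι] (M : Matrix ι ι ℝ) : ℝ :=
  sInf {r : ℝ | ∃ v : ι → ℝ, euclNorm v = 1 ∧ r = v ⬝ᵥ (M *ᵥ v)}

noncomputable def lambdaMax {ι : Type*} [Fintype ι] (M : Matrix ι ι ℝ) : ℝ :=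
  sSup {r : ℝ | ∃ v : ι → ℝ, euclNorm v = 1 ∧ r = v ⬝ᵥ (M *ᵥ v)}

noncomputable def condNum {ι : Type*} [Fintype ι] (M : Matrix ι ι ℝ) : ℝ :=
  lambdaMax M / lambdaMin M

noncomputable def gradProj {m n : ℕ} (B : Matrix (Fin m) (Fin n) ℝ) :
    Matrix (Fin n) (Fin n) ℝ :=
  1 - Bᵀ * (B * Bᵀ)⁻¹ * B

/-- The proximity measure `δ(x, μ) = ‖P_{AX}((1/μ) X c - e)‖`. -/
noncomputable def prox {m n : ℕ} (A : Matrix (Fin m) (Fin n) ℝ)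
    (c x : Fin n → ℝ) (μ : ℝ) : ℝ :=
  euclNorm (gradProj (A * Matrix.diagonal x) *ᵥ (μ⁻¹ • (Matrix.diagonal x *ᵥ c) - 1))

/-- The proximity measure as `min_{(y,s) ∈ F_d} ‖(1/μ) X s - e‖`. -/
noncomputable def proxMin {m n : ℕ} (A : Matrix (Fin m) (Fin n) ℝ)
    (c x : Fin n → ℝ) (μ : ℝ) : ℝ :=
  sInf {r : ℝ | ∃ (y : Fin m → ℝ) (s : Fin n → ℝ),
    Aᵀ *ᵥ y + s = c ∧ (∀ i, 0 ≤ s i) ∧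
    r = euclNorm (μ⁻¹ • (Matrix.diagonal x *ᵥ s) - 1)}

/-- The primal normal matrix `A X² Aᵀ` is positive semidefinite. -/
theorem normalPSD {m n : ℕ} (A : Matrix (Fin m) (Fin n) ℝ) (x : Fin n → ℝ) :
    (A * Matrix.diagonal x ^ 2 * Aᵀ).PosSemidef := by
  have h : A * Matrix.diagonal x ^ 2 * Aᵀ
      = (A * Matrix.diagonal x) * (A * Matrix.diagonal x)ᴴ := by
    rw [Matrix.conjTranspose_mul, Matrix.conjTranspose_eq_transpose_of_trivial,
      Matrix.conjTranspose_eq_transpose_of_trivial, Matrix.diagonal_transpose, pow_two,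
      Matrix.mul_assoc, Matrix.mul_assoc, Matrix.mul_assoc]
  rw [h]
  exact Matrix.posSemidef_self_mul_conjTranspose _

/-- The ν-thresholded scaled distance `‖y - z‖_{x,ν}`. -/
noncomputable def tdist {n : ℕ} (x : Fin n → ℝ) (ν : ℝ) (y z : Fin n → ℝ) : ℝ :=
  Real.sqrt (∑ j, if ν ≤ x j then ((y j - z j) / x j) ^ 2 else (y j - z j) ^ 2)

/-!
Write `q = P_{AX}((1/μ) X c - e)`, so `δ(x, μ) = ‖q‖`, and put `D = W X⁻¹`, `P = P_{AW}`.
Since `D X Aᵀ = W Aᵀ`, the rescaling `D` maps the range of `(AX)ᵀ` into that of `(AW)ᵀ`,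
which `P` annihilates; hence `X⁻¹(Δx - Δx̃) = D P D q - q`. Moreover `P` fixes `p = D⁻¹ q`,
because `A W p = A X q = 0`. The diagonal of `E = D - I` is bounded by `θ` (it vanishes on `S`)
and `D q - q = E q`, `q - p = E p`, so
  `D P D q - q = (P E q - (I - P)(q - p)) + E P D q`.
The first two terms are orthogonal, of norms at most `θ‖q‖` and `θ‖p‖ ≤ (4/3) θ‖q‖`; the last
has norm at most `θ(1 + θ)‖q‖`. Altogether `(5/3 + 1 + θ) θ ‖q‖ ≤ 3 θ ‖q‖` for `θ ≤ 1/4`.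
-/

section euclNorm

variable {ι : Type*} [Fintype ι]

lemma euclNorm_eq_norm (v : ι → ℝ) :
    euclNorm v = ‖(WithLp.toLp 2 v : EuclideanSpace ℝ ι)‖ := by
  simp [euclNorm, EuclideanSpace.norm_eq]

lemma euclNorm_nonneg (v : ι → ℝ) : 0 ≤ euclNorm v := Real.sqrt_nonneg _

lemma euclNorm_add_le (u v : ι → ℝ) : euclNorm (u + v) ≤ euclNorm u + euclNorm v := by
  simpa only [euclNorm_eq_norm, WithLp.toLp_add] using norm_add_le _ _

lemma euclNorm_sub_le (u v : ι → ℝ) : euclNorm (u - v) ≤ euclNorm u + euclNorm v := by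
  simpa only [euclNorm_eq_norm, WithLp.toLp_sub] using norm_sub_le _ _

lemma euclNorm_add_sq_of_dotProduct_eq_zero {u v : ι → ℝ} (h : u ⬝ᵥ v = 0) :
    euclNorm (u + v) ^ 2 = euclNorm u ^ 2 + euclNorm v ^ 2 := by
  simp only [euclNorm_eq_norm, WithLp.toLp_add, sq]
  refine norm_add_sq_eq_norm_sq_add_norm_sq_real (F := EuclideanSpace ℝ ι) ?_
  rw [EuclideanSpace.inner_toLp_toLp, star_trivial, dotProduct_comm, h]

lemma euclNorm_sub_sq_of_dotProduct_eq_zero {u v : ι → ℝ} (h : u ⬝ᵥ v = 0) :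
    euclNorm (u - v) ^ 2 = euclNorm u ^ 2 + euclNorm v ^ 2 := by
  simp only [euclNorm_eq_norm, WithLp.toLp_sub, sq]
  refine norm_sub_sq_eq_norm_sq_add_norm_sq_real (F := EuclideanSpace ℝ ι) ?_
  rw [EuclideanSpace.inner_toLp_toLp, star_trivial, dotProduct_comm, h]

lemma euclNorm_diagonal_mulVec_le [DecidableEq ι] {d : ι → ℝ} {c : ℝ} (hc : 0 ≤ c)
    (hd : ∀ i, |d i| ≤ c) (v : ι → ℝ) :
    euclNorm (diagonal d *ᵥ v) ≤ c * euclNorm v := by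
  rw [euclNorm, euclNorm, ← Real.sqrt_sq hc, ← Real.sqrt_mul (sq_nonneg c), Finset.mul_sum]
  refine Real.sqrt_le_sqrt (Finset.sum_le_sum fun i _ => ?_)
  rw [mulVec_diagonal, mul_pow]
  exact mul_le_mul_of_nonneg_right (sq_le_sq' (abs_le.mp (hd i)).1 (abs_le.mp (hd i)).2)
    (sq_nonneg _)

end euclNorm

section StarProjection

variable {ι : Type*} [Fintype ι] [DecidableEq ι] {P : Matrix ι ι ℝ}

lemma IsStarProjection.mulVec_dotProduct_one_sub_mulVec (hP : IsStarProjection P)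
    (u v : ι → ℝ) : (P *ᵥ u) ⬝ᵥ ((1 - P) *ᵥ v) = 0 := by
  have hPt : Pᵀ = P := by
    rw [← conjTranspose_eq_transpose_of_trivial]; exact hP.isSelfAdjoint.star_eq
  rw [← vecMul_transpose, hPt, ← dotProduct_mulVec, mulVec_mulVec, Matrix.mul_sub,
    Matrix.mul_one, hP.isIdempotentElem.eq, sub_self, zero_mulVec, dotProduct_zero]

lemma IsStarProjection.euclNorm_sq_eq (hP : IsStarProjection P) (v : ι → ℝ) :
    euclNorm v ^ 2 = euclNorm (P *ᵥ v) ^ 2 + euclNorm ((1 - P) *ᵥ v) ^ 2 := by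
  rw [← euclNorm_add_sq_of_dotProduct_eq_zero (hP.mulVec_dotProduct_one_sub_mulVec v v),
    ← add_mulVec, add_sub_cancel, one_mulVec]

lemma IsStarProjection.euclNorm_mulVec_le (hP : IsStarProjection P) (v : ι → ℝ) :
    euclNorm (P *ᵥ v) ≤ euclNorm v := by
  have := hP.euclNorm_sq_eq v
  nlinarith [euclNorm_nonneg v, euclNorm_nonneg (P *ᵥ v), sq_nonneg (euclNorm ((1 - P) *ᵥ v))]

end StarProjection

section Perturbation

variable {ι : Type*} [Fintype ι] [DecidableEq ι] {P : Matrix ι ι ℝ}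

lemma IsStarProjection.euclNorm_diagonal_mulVec_mulVec_diagonal_mulVec_sub_le
    (hP : IsStarProjection P) {d : ι → ℝ} {θ : ℝ} (hθ0 : 0 ≤ θ) (hθ : θ ≤ 1 / 4)
    (hd : ∀ i, |d i - 1| ≤ θ) {p q : ι → ℝ} (hp : P *ᵥ p = p) (hq : diagonal d *ᵥ p = q) :
    euclNorm (diagonal d *ᵥ (P *ᵥ (diagonal d *ᵥ q)) - q) ≤ 3 * θ * euclNorm q := by
  set D := diagonal d
  set E := D - 1 with hE_def
  have hE : E = diagonal (d - 1) := by rw [hE_def, ← diagonal_one, diagonal_sub]; rfl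
  have hEv (v : ι → ℝ) : euclNorm (E *ᵥ v) ≤ θ * euclNorm v :=
    hE ▸ euclNorm_diagonal_mulVec_le hθ0 hd v
  have hdabs (i : ι) : |d i| ≤ 1 + θ := by
    obtain ⟨hlo, hhi⟩ := abs_le.mp (hd i)
    exact abs_le.mpr ⟨by linarith, by linarith⟩
  have hDv (v : ι → ℝ) : euclNorm (D *ᵥ v) ≤ (1 + θ) * euclNorm v :=
    euclNorm_diagonal_mulVec_le (by linarith) hdabs v
  have hqp : q - p = E *ᵥ p := by rw [sub_mulVec, one_mulVec, hq]
  have hp_le : euclNorm p ≤ 4 / 3 * euclNorm q := by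
    have := euclNorm_sub_le q (q - p)
    rw [sub_sub_cancel, hqp] at this
    nlinarith [hEv p, euclNorm_nonneg p, euclNorm_nonneg q]
  set u₁ := P *ᵥ (E *ᵥ q)
  set u₂ := (1 - P) *ᵥ (q - p)
  set u₃ := E *ᵥ (P *ᵥ (D *ᵥ q))
  have hsplit : D *ᵥ (P *ᵥ (D *ᵥ q)) - q = (u₁ - u₂) + u₃ := by
    simp only [u₁, u₂, u₃, E, sub_mulVec, mulVec_sub, one_mulVec, hp]
    abel
  have hu₁ : euclNorm u₁ ≤ θ * euclNorm q := (hP.euclNorm_mulVec_le _).trans (hEv q)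
  have hu₂ : euclNorm u₂ ≤ θ * (4 / 3 * euclNorm q) := by
    refine (hP.one_sub.euclNorm_mulVec_le _).trans ?_
    rw [hqp]
    exact (hEv p).trans (mul_le_mul_of_nonneg_left hp_le hθ0)
  have hu₁₂ : euclNorm (u₁ - u₂) ≤ 5 / 3 * (θ * euclNorm q) := by
    have hsq := euclNorm_sub_sq_of_dotProduct_eq_zero
      (hP.mulVec_dotProduct_one_sub_mulVec (E *ᵥ q) (q - p))
    nlinarith [euclNorm_nonneg u₁, euclNorm_nonneg u₂, euclNorm_nonneg (u₁ - u₂),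
      mul_nonneg hθ0 (euclNorm_nonneg q)]
  have hu₃ : euclNorm u₃ ≤ θ * ((1 + θ) * euclNorm q) :=
    (hEv _).trans (mul_le_mul_of_nonneg_left ((hP.euclNorm_mulVec_le _).trans (hDv q)) hθ0)
  rw [hsplit]
  refine (euclNorm_add_le _ _).trans ?_
  nlinarith [mul_nonneg hθ0 (euclNorm_nonneg q),
    mul_nonneg (mul_nonneg hθ0 hθ0) (euclNorm_nonneg q)]

end Perturbation

section gradProj

variable {m n : ℕ}

lemma gradProj_transpose (B : Matrix (Fin m) (Fin n) ℝ) : (gradProj B)ᵀ = gradProj B := by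
  rw [gradProj, transpose_sub, transpose_one, transpose_mul, transpose_mul, transpose_transpose,
    transpose_nonsing_inv, transpose_mul, transpose_transpose, Matrix.mul_assoc]

lemma sub_gradProj_mulVec (B : Matrix (Fin m) (Fin n) ℝ) (v : Fin n → ℝ) :
    v - gradProj B *ᵥ v = Bᵀ *ᵥ ((B * Bᵀ)⁻¹ *ᵥ (B *ᵥ v)) := by
  rw [gradProj, sub_mulVec, one_mulVec, sub_sub_cancel, mulVec_mulVec, mulVec_mulVec]

lemma gradProj_mulVec_of_mulVec_eq_zero {B : Matrix (Fin m) (Fin n) ℝ} {v : Fin n → ℝ}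
    (hv : B *ᵥ v = 0) : gradProj B *ᵥ v = v := by
  rw [← sub_eq_zero, ← neg_eq_zero, neg_sub, sub_gradProj_mulVec, hv, mulVec_zero, mulVec_zero]

variable {B : Matrix (Fin m) (Fin n) ℝ} (hB : IsUnit (B * Bᵀ).det)
include hB

lemma mul_gradProj : B * gradProj B = 0 := by
  rw [gradProj, Matrix.mul_sub, Matrix.mul_one, ← Matrix.mul_assoc, ← Matrix.mul_assoc,
    mul_nonsing_inv _ hB, Matrix.one_mul, sub_self]

lemma isStarProjection_gradProj : IsStarProjection (gradProj B) := by
  refine ⟨?_, ?_⟩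
  · rw [IsIdempotentElem]
    nth_rewrite 1 [gradProj]
    rw [Matrix.sub_mul, Matrix.one_mul, Matrix.mul_assoc, mul_gradProj hB,
      Matrix.mul_zero, sub_zero]
  · rw [IsSelfAdjoint, star_eq_conjTranspose, conjTranspose_eq_transpose_of_trivial,
      gradProj_transpose]

lemma mulVec_gradProj_mulVec (v : Fin n → ℝ) : B *ᵥ (gradProj B *ᵥ v) = 0 := by
  rw [mulVec_mulVec, mul_gradProj hB, zero_mulVec]

lemma gradProj_mulVec_transpose_mulVec (u : Fin m → ℝ) : gradProj B *ᵥ (Bᵀ *ᵥ u) = 0 := by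
  rw [← gradProj_transpose, mulVec_mulVec, ← transpose_mul, mul_gradProj hB, transpose_zero,
    zero_mulVec]

end gradProj

section Scaling

variable {m n : ℕ}

lemma inv_diagonal_of_ne_zero {K ι : Type*} [Field K] [Fintype ι] [DecidableEq ι] {x : ι → K}
    (hx : ∀ i, x i ≠ 0) : (diagonal x)⁻¹ = diagonal x⁻¹ := by
  refine inv_eq_left_inv ?_
  rw [diagonal_mul_diagonal, ← diagonal_one]
  exact congrArg diagonal (funext fun i => inv_mul_cancel₀ (hx i))

lemma isUnit_det_mul_transpose_of_rank_eq {K ι κ : Type*} [Field K] [LinearOrder K]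
    [IsStrictOrderedRing K] [Fintype ι] [DecidableEq ι] [Fintype κ] {B : Matrix ι κ K}
    (hB : B.rank = Fintype.card ι) : IsUnit (B * Bᵀ).det := by
  have hrange : LinearMap.range (B * Bᵀ).mulVecLin = ⊤ :=
    Submodule.eq_top_of_finrank_eq (by rw [← rank, rank_self_mul_transpose, hB,
      Module.finrank_fintype_fun_eq_card])
  rw [← isUnit_iff_isUnit_det, ← mulVec_surjective_iff_isUnit]
  exact LinearMap.range_eq_top.mp hrange

lemma isUnit_det_mul_diagonal_mul_transpose {A : Matrix (Fin m) (Fin n) ℝ} (hA : A.rank = m)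
    {x : Fin n → ℝ} (hx : ∀ i, x i ≠ 0) :
    IsUnit ((A * diagonal x) * (A * diagonal x)ᵀ).det := by
  have hdet : IsUnit (diagonal x).det := by
    rw [det_diagonal]
    exact isUnit_iff_ne_zero.mpr (Finset.prod_ne_zero_iff.mpr fun i _ => hx i)
  refine isUnit_det_mul_transpose_of_rank_eq ?_
  rw [rank_mul_eq_left_of_isUnit_det _ _ hdet, hA, Fintype.card_fin]

lemma mul_diagonal_mulVec_diagonal_div {K ι κ : Type*} [Field K] [Fintype κ] [DecidableEq κ]
    (A : Matrix ι κ K) {w : κ → K} (hw : ∀ i, w i ≠ 0) (x v : κ → K) :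
    (A * diagonal w) *ᵥ (diagonal (x / w) *ᵥ v) = (A * diagonal x) *ᵥ v := by
  rw [mulVec_mulVec, Matrix.mul_assoc, diagonal_mul_diagonal]
  congr 3
  exact funext fun i => mul_div_cancel₀ (x i) (hw i)

lemma gradProj_mulVec_diagonal_div_mulVec_gradProj {A : Matrix (Fin m) (Fin n) ℝ}
    {x w : Fin n → ℝ} (hx : ∀ i, x i ≠ 0)
    (hw : IsUnit ((A * diagonal w) * (A * diagonal w)ᵀ).det) (v : Fin n → ℝ) :
    gradProj (A * diagonal w) *ᵥ (diagonal (w / x) *ᵥ (gradProj (A * diagonal x) *ᵥ v)) =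
      gradProj (A * diagonal w) *ᵥ (diagonal (w / x) *ᵥ v) := by
  have hscale : diagonal (w / x) * (A * diagonal x)ᵀ = (A * diagonal w)ᵀ := by
    rw [transpose_mul, transpose_mul, diagonal_transpose, diagonal_transpose, ← Matrix.mul_assoc,
      diagonal_mul_diagonal]
    congr 2
    exact funext fun i => div_mul_cancel₀ (w i) (hx i)
  refine (sub_eq_zero.mp ?_).symm
  rw [← mulVec_sub, ← mulVec_sub, sub_gradProj_mulVec, mulVec_mulVec _ (diagonal (w / x)),
    hscale, gradProj_mulVec_transpose_mulVec hw]

end Scaling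

lemma abs_ite_div_sub_one_le_tdist {n : ℕ} {x z : Fin n → ℝ} {ν : ℝ} (j : Fin n)
    (hx : x j ≠ 0) : |(if ν ≤ x j then z j else x j) / x j - 1| ≤ tdist x ν z x := by
  by_cases hj : ν ≤ x j
  · rw [if_pos hj, div_sub_one hx, ← Real.sqrt_sq_eq_abs]
    refine Real.sqrt_le_sqrt ?_
    have := Finset.single_le_sum
      (f := fun i => if ν ≤ x i then ((z i - x i) / x i) ^ 2 else (z i - x i) ^ 2)
      (fun i _ => by positivity) (Finset.mem_univ j)
    simpa only [if_pos hj] using this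
  · rw [if_neg hj, div_self hx, sub_self, abs_zero]
    exact Real.sqrt_nonneg _

theorem stmt_8_general {m n : ℕ} (A : Matrix (Fin m) (Fin n) ℝ) (c : Fin n → ℝ)
    -- Assumption A1: nonempty primal and dual interiors, full row rank
    (hrank : A.rank = m)
    (ν : ℝ) (μ : ℝ) (x z : Fin n → ℝ)
    (hxpos : ∀ i, 0 < x i) (hzpos : ∀ i, 0 < z i)
    (hθ : tdist x ν z x ≤ 1 / 4)
    (w : Fin n → ℝ) (hw : w = fun j => if ν ≤ x j then z j else x j)
    (Δx Δxtil : Fin n → ℝ)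
    (hΔx : Δx = -(Matrix.diagonal x *ᵥ (gradProj (A * Matrix.diagonal x) *ᵥ
        (μ⁻¹ • (Matrix.diagonal x *ᵥ c) - 1))))
    (hΔxtil : Δxtil = -(Matrix.diagonal w *ᵥ (gradProj (A * Matrix.diagonal w) *ᵥ
        ((Matrix.diagonal w * (Matrix.diagonal x)⁻¹) *ᵥ
          (μ⁻¹ • (Matrix.diagonal x *ᵥ c) - 1))))) :
    euclNorm ((Matrix.diagonal x)⁻¹ *ᵥ (Δx - Δxtil)) ≤ 3 * tdist x ν z x * prox A c x μ := by
  have hxne (i : Fin n) : x i ≠ 0 := (hxpos i).ne'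
  have hwne (i : Fin n) : w i ≠ 0 := by
    rw [hw]; dsimp only; split_ifs
    exacts [(hzpos i).ne', hxne i]
  have hPw := isUnit_det_mul_diagonal_mul_transpose hrank hwne
  set g := μ⁻¹ • (diagonal x *ᵥ c) - 1
  set q := gradProj (A * diagonal x) *ᵥ g
  have hd (j : Fin n) : |(w / x) j - 1| ≤ tdist x ν z x := by
    rw [hw]; exact abs_ite_div_sub_one_le_tdist j (hxne j)
  have hp : gradProj (A * diagonal w) *ᵥ (diagonal (x / w) *ᵥ q) = diagonal (x / w) *ᵥ q := by
    refine gradProj_mulVec_of_mulVec_eq_zero ?_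
    rw [mul_diagonal_mulVec_diagonal_div A hwne,
      mulVec_gradProj_mulVec (isUnit_det_mul_diagonal_mul_transpose hrank hxne)]
  have hq : diagonal (w / x) *ᵥ (diagonal (x / w) *ᵥ q) = q := by
    funext j
    simp only [mulVec_diagonal, Pi.div_apply]
    field_simp [hxne j, hwne j]
  have hdiff : (diagonal x)⁻¹ *ᵥ (Δx - Δxtil) =
      diagonal (w / x) *ᵥ (gradProj (A * diagonal w) *ᵥ (diagonal (w / x) *ᵥ q)) - q := by
    have hWX : diagonal w * (diagonal x)⁻¹ = diagonal (w / x) := by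
      rw [inv_diagonal_of_ne_zero hxne, diagonal_mul_diagonal, div_eq_mul_inv]; rfl
    rw [hΔx, hΔxtil, hWX, ← gradProj_mulVec_diagonal_div_mulVec_gradProj hxne hPw,
      inv_diagonal_of_ne_zero hxne]
    funext j
    simp only [mulVec_diagonal, Pi.sub_apply, Pi.neg_apply, Pi.inv_apply, Pi.div_apply]
    field_simp [hxne j]
    ring
  rw [hdiff]
  exact (isStarProjection_gradProj hPw).euclNorm_diagonal_mulVec_mulVec_diagonal_mulVec_sub_le
    (Real.sqrt_nonneg _) hθ hd hp hq

/-- the delayed-scaling surrogate direction approximates the exact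
primal Newton direction in the scaled norm. -/
theorem stmt_8 {m n : ℕ} (A : Matrix (Fin m) (Fin n) ℝ) (b : Fin m → ℝ) (c : Fin n → ℝ)
    -- Assumption A1: nonempty primal and dual interiors, full row rank
    (hrank : A.rank = m)
    (hFp0 : ∃ x0 : Fin n → ℝ, A *ᵥ x0 = b ∧ ∀ i, 0 < x0 i)
    (hFd0 : ∃ (y0 : Fin m → ℝ) (s0 : Fin n → ℝ), Aᵀ *ᵥ y0 + s0 = c ∧ ∀ i, 0 < s0 i)
    (ν : ℝ) (hν0 : 0 < ν) (hν1 : ν ≤ 1)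
    (μ : ℝ) (hμ : 0 < μ)
    (x z : Fin n → ℝ)
    (hxfeas : A *ᵥ x = b) (hxpos : ∀ i, 0 < x i)
    (hzfeas : A *ᵥ z = b) (hzpos : ∀ i, 0 < z i)
    (hθ : tdist x ν z x ≤ 1 / 4)
    (w : Fin n → ℝ) (hw : w = fun j => if ν ≤ x j then z j else x j)
    (Δx Δxtil : Fin n → ℝ)
    (hΔx : Δx = -(Matrix.diagonal x *ᵥ (gradProj (A * Matrix.diagonal x) *ᵥ
        (μ⁻¹ • (Matrix.diagonal x *ᵥ c) - 1))))
    (hΔxtil : Δxtil = -(Matrix.diagonal w *ᵥ (gradProj (A * Matrix.diagonal w) *ᵥ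
        ((Matrix.diagonal w * (Matrix.diagonal x)⁻¹) *ᵥ
          (μ⁻¹ • (Matrix.diagonal x *ᵥ c) - 1))))) :
    euclNorm ((Matrix.diagonal x)⁻¹ *ᵥ (Δx - Δxtil)) ≤ 3 * tdist x ν z x * prox A c x μ :=
  stmt_8_general A c hrank ν μ x z hxpos hzpos hθ w hw Δx Δxtil hΔx hΔxtil
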